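/- Let A = ℂ[b,c,d][d⁻¹], a := (1 + bc)·d⁻¹ ∈ A, and define the operators h̃ := c∂_c − b∂_b − d∂_d, x̃₊ := a∂_b + c∂_d, x̃₋ := d∂_c on A. Then the Casimir operator equals the Laplace–Beltrami operator in these coordinates: x̃₊∘x̃₋ + (1/4)·h̃∘h̃ − (1/2)·h̃ = ∂_b∘∂_c + (1/4)·E∘E + (1/2)·E as ℂ-linear endomorphisms of A, where E := c∂_c + b∂_b + d∂_d. -/

import Mathlib

/-!
The Casimir identity is an identity of differential operators with polynomial coefficients, and
it reduces to two facts. First, the partial derivatives commute: their commutators are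
derivations of `ℂ[b,c,d][d⁻¹]` vanishing on `b, c, d`, and a derivation of a localization of a
polynomial ring is determined by its values on the variables. Second, once the operators are
expanded and the partials are allowed to commute, the difference of the two sides is
`(ad - bc - 1) ∂_b∂_c`, which vanishes because `ad - bc = 1`, the defining equation of `SL₂`.
-/

noncomputable section

namespace SU2Casimir

open MvPolynomial

/-- The polynomial algebra `ℂ[b,c,d]` (variables `X 0 = b`, `X 1 = c`, `X 2 = d`). -/
abbrev Rng : Type := MvPolynomial (Fin 3) ℂ

/-- `A = ℂ[b,c,d][d⁻¹]`, the localization at the powers of `d`. -/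
abbrev Alg : Type := Localization.Away (X 2 : Rng)

end SU2Casimir

namespace Derivation

theorem ext_of_isLocalization {K R S M : Type*} [CommRing K] [CommRing R] [CommRing S]
    [Algebra R S] [Algebra K S] (W : Submonoid R) [IsLocalization W S]
    [AddCommGroup M] [Module K M] [Module S M] [IsScalarTower K S M]
    {D₁ D₂ : Derivation K S M} (h : ∀ r, D₁ (algebraMap R S r) = D₂ (algebraMap R S r)) :
    D₁ = D₂ := by
  ext x
  obtain ⟨⟨r, s⟩, hx⟩ := IsLocalization.surj W x
  have hs : IsUnit (algebraMap R S s) := IsLocalization.map_units S s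
  have hsmul : ∀ D : Derivation K S M,
      algebraMap R S s • D x = D (algebraMap R S r) - x • D (algebraMap R S s) := by
    intro D
    rw [← hx, leibniz, add_sub_cancel_left]
  rw [← hs.smul_left_cancel, hsmul, hsmul, h, h]

theorem ext_of_isLocalization_mvPolynomial {σ K S M : Type*} [CommRing K] [CommRing S]
    [Algebra (MvPolynomial σ K) S] [Algebra K S] [IsScalarTower K (MvPolynomial σ K) S]
    (W : Submonoid (MvPolynomial σ K)) [IsLocalization W S]
    [AddCommGroup M] [Module K M] [Module S M] [IsScalarTower K S M]
    [Module (MvPolynomial σ K) M] [IsScalarTower (MvPolynomial σ K) S M]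
    {D₁ D₂ : Derivation K S M}
    (h : ∀ i, D₁ (algebraMap (MvPolynomial σ K) S (.X i)) =
      D₂ (algebraMap (MvPolynomial σ K) S (.X i))) :
    D₁ = D₂ := by
  refine ext_of_isLocalization W fun r => ?_
  have := MvPolynomial.derivation_ext (D₁ := D₁.compAlgebraMap (MvPolynomial σ K))
    (D₂ := D₂.compAlgebraMap (MvPolynomial σ K)) h
  exact congr($this r)

theorem apply_apply_comm_of_lie_eq_zero {K A : Type*} [CommRing K] [CommRing A] [Algebra K A]
    {D₁ D₂ : Derivation K A A} (h : ⁅D₁, D₂⁆ = 0) (f : A) : D₁ (D₂ f) = D₂ (D₁ f) :=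
  sub_eq_zero.mp (by rw [← commutator_apply, h, zero_apply])

end Derivation

namespace SU2Casimir

open MvPolynomial

theorem casimir_eq_laplacian {K A : Type*} [Field K] [NeZero (2 : K)] [CommRing A]
    [Algebra K A]
    {a b c d : A} (hdet : a * d - b * c = 1) {Db Dc Dd : Derivation K A A}
    (hDb : Db b = 1 ∧ Db c = 0 ∧ Db d = 0)
    (hDc : Dc b = 0 ∧ Dc c = 1 ∧ Dc d = 0)
    (hDd : Dd b = 0 ∧ Dd c = 0 ∧ Dd d = 1)
    (hcb : ⁅Dc, Db⁆ = 0) (hdb : ⁅Dd, Db⁆ = 0) (hdc : ⁅Dd, Dc⁆ = 0)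
    {H Xp Xm E : A →ₗ[K] A}
    (hH : H = c • Dc.toLinearMap - b • Db.toLinearMap - d • Dd.toLinearMap)
    (hXp : Xp = a • Db.toLinearMap + c • Dd.toLinearMap)
    (hXm : Xm = d • Dc.toLinearMap)
    (hE : E = c • Dc.toLinearMap + b • Db.toLinearMap + d • Dd.toLinearMap) :
    Xp ∘ₗ Xm + ((1 : K) / 4) • (H ∘ₗ H) - ((1 : K) / 2) • H =
      Db.toLinearMap ∘ₗ Dc.toLinearMap + ((1 : K) / 4) • (E ∘ₗ E) + ((1 : K) / 2) • E := by
  obtain ⟨hDbb, hDbc, hDbd⟩ := hDb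
  obtain ⟨hDcb, hDcc, hDcd⟩ := hDc
  obtain ⟨hDdb, hDdc, hDdd⟩ := hDd
  subst hH hXp hXm hE
  ext f
  simp only [LinearMap.smul_apply, LinearMap.add_apply, LinearMap.sub_apply,
    LinearMap.comp_apply, Derivation.coeFn_coe, map_add, map_sub, Derivation.leibniz, smul_eq_mul,
    hDbb, hDbc, hDbd, hDcb, hDcc, hDcd, hDdb, hDdc, hDdd,
    Derivation.apply_apply_comm_of_lie_eq_zero hcb, Derivation.apply_apply_comm_of_lie_eq_zero hdb,
    Derivation.apply_apply_comm_of_lie_eq_zero hdc]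
  simp only [Algebra.smul_def]
  set half := algebraMap K A (1 / 2)
  have hhalf : 2 * half = 1 := by
    rw [← map_ofNat (algebraMap K A), ← map_mul, mul_one_div_cancel two_ne_zero, map_one]
  have hquarter : algebraMap K A (1 / 4) = half * half := by
    rw [← map_mul, one_div_mul_one_div]; norm_num
  rw [hquarter]
  linear_combination Db (Dc f) * hdet
    - ((d * c * Dc (Dd f) + b * c * Db (Dc f)) * (2 * half + 1) + c * Dc f) * hhalf

theorem su2_casimir_is_laplacian
    (b c d : Alg)
    (hb : b = algebraMap Rng Alg (X 0))
    (hc : c = algebraMap Rng Alg (X 1))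
    (hd : d = algebraMap Rng Alg (X 2))
    (Db Dc Dd : Derivation ℂ Alg Alg)
    (hDb : Db b = 1 ∧ Db c = 0 ∧ Db d = 0)
    (hDc : Dc b = 0 ∧ Dc c = 1 ∧ Dc d = 0)
    (hDd : Dd b = 0 ∧ Dd c = 0 ∧ Dd d = 1)
    (dinv : Alg) (hdinv : d * dinv = 1)
    (a : Alg) (ha : a = (1 + b * c) * dinv)
    (H Xp Xm Ee : Alg →ₗ[ℂ] Alg)
    (hH : H = c • Dc.toLinearMap - b • Db.toLinearMap - d • Dd.toLinearMap)
    (hXp : Xp = a • Db.toLinearMap + c • Dd.toLinearMap)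
    (hXm : Xm = d • Dc.toLinearMap)
    (hEe : Ee = c • Dc.toLinearMap + b • Db.toLinearMap + d • Dd.toLinearMap) :
    Xp ∘ₗ Xm + ((1 : ℂ) / 4) • (H ∘ₗ H) - ((1 : ℂ) / 2) • H =
      Db.toLinearMap ∘ₗ Dc.toLinearMap + ((1 : ℂ) / 4) • (Ee ∘ₗ Ee) +
        ((1 : ℂ) / 2) • Ee := by
  have hext : ∀ D₁ D₂ : Derivation ℂ Alg Alg, Set.EqOn D₁ D₂ {b, c, d} → D₁ = D₂ :=
    fun D₁ D₂ h =>
      Derivation.ext_of_isLocalization_mvPolynomial (Submonoid.powers (X 2 : Rng)) fun i => by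
        fin_cases i
        exacts [hb ▸ h (by simp), hc ▸ h (by simp), hd ▸ h (by simp)]
  have hdet : a * d - b * c = 1 := by
    rw [ha]
    linear_combination (1 + b * c) * hdinv
  refine casimir_eq_laplacian hdet hDb hDc hDd ?_ ?_ ?_ hH hXp hXm hEe <;>
    exact hext _ _ (by simp [Set.EqOn, Derivation.commutator_apply, hDb, hDc, hDd])

end SU2Casimir
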